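/- arXiv:2604.09786 — 3 statements merged into one kernel-verified Lean document; each statement's English description precedes it below -/
import Mathlib

section
/- Let X ⊆ ℝ^d be complete. Then for every C ∈ 𝒦(X), the set of extreme points of C is contained in X, i.e., extremePoints ℝ C ⊆ X. -/
/-! The minimal face of a convex set at an extreme point `x` is `{x}`. By induction over `𝒦(X)`,
every member is convex, has finitely many minimal faces, and all of them lie in `𝒦(X)`: the
minimal faces of `A ∩ B` are intersections of minimal faces of `A` and `B`, and the minimal face
of `conv (A ∪ B)` at `x` is the convex hull of its traces on `A` and `B`, which are faces of `A` and
`B`, hence empty or minimal faces by finiteness. So `{x} ∈ 𝒦(X)` for every extreme point `x`,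
and completeness gives `x ∈ X`. -/

/-- The point-generated convex lattice `𝒦(X)`: the smallest family of subsets of `ℝ^d`
containing all singletons of points of `X` and closed under intersection and
convex hull of unions. -/
inductive PtLattice {d : ℕ} (X : Set (Fin d → ℝ)) : Set (Fin d → ℝ) → Prop
  | single {x : Fin d → ℝ} (hx : x ∈ X) : PtLattice X {x}
  | inter {A B : Set (Fin d → ℝ)} : PtLattice X A → PtLattice X B → PtLattice X (A ∩ B)
  | join {A B : Set (Fin d → ℝ)} : PtLattice X A → PtLattice X B →
      PtLattice X (convexHull ℝ (A ∪ B))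

open Set

section MinFace

variable (𝕜 : Type*) {E : Type*} [Field 𝕜] [LinearOrder 𝕜] [AddCommGroup E] [Module 𝕜 E]

/-- For convex `C` and `x ∈ C`, the smallest face of `C` containing `x`. -/
def minFace (C : Set E) (x : E) : Set E :=
  {y ∈ C | ∃ δ : 𝕜, 0 < δ ∧ x + δ • (x - y) ∈ C}

variable {𝕜} {A B C F : Set E} {x y p q : E}

lemma minFace_subset : minFace 𝕜 C x ⊆ C := fun _ hy => hy.1

lemma IsExtreme.inter_of_subset (hF : IsExtreme 𝕜 C F) (hAC : A ⊆ C) : IsExtreme 𝕜 A (A ∩ F) :=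
  ⟨inter_subset_left, fun _ hp _ hq _ hy hseg => ⟨hp, hF.2 (hAC hp) (hAC hq) hy.2 hseg⟩⟩

variable [IsStrictOrderedRing 𝕜]

lemma self_mem_minFace (hx : x ∈ C) : x ∈ minFace 𝕜 C x :=
  ⟨hx, 1, one_pos, by simpa using hx⟩

lemma Convex.add_smul_sub_mem_of_le (hC : Convex 𝕜 C) (hx : x ∈ C) {δ₀ δ : 𝕜}
    (h₀ : x + δ₀ • (x - y) ∈ C) (hδ : 0 < δ) (hle : δ ≤ δ₀) : x + δ • (x - y) ∈ C := by
  have hδ₀ : 0 < δ₀ := hδ.trans_le hle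
  convert hC.add_smul_sub_mem hx h₀ ⟨by positivity, (div_le_one hδ₀).2 hle⟩ using 2
  rw [add_sub_cancel_left, smul_smul, div_mul_cancel₀ _ hδ₀.ne']

lemma Convex.minFace (hC : Convex 𝕜 C) (hx : x ∈ C) : Convex 𝕜 (minFace 𝕜 C x) := by
  rintro y₁ ⟨hy₁, δ₁, hδ₁, h₁⟩ y₂ ⟨hy₂, δ₂, hδ₂, h₂⟩ a b ha hb hab
  have hδ : 0 < min δ₁ δ₂ := lt_min hδ₁ hδ₂
  refine ⟨hC hy₁ hy₂ ha hb hab, min δ₁ δ₂, hδ, ?_⟩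
  convert hC (hC.add_smul_sub_mem_of_le hx h₁ hδ (min_le_left _ _))
    (hC.add_smul_sub_mem_of_le hx h₂ hδ (min_le_right _ _)) ha hb hab using 1
  obtain rfl : b = 1 - a := by linear_combination hab
  module

lemma mem_minFace_of_mem_openSegment (hC : Convex 𝕜 C) (hp : p ∈ C) (hq : q ∈ C)
    (hy : y ∈ openSegment 𝕜 p q) (hyx : y ∈ minFace 𝕜 C x) : p ∈ minFace 𝕜 C x := by
  obtain ⟨u, v, hu, hv, huv, rfl⟩ := hy
  obtain ⟨-, δ, hδ, hz⟩ := hyx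
  have hpos : 0 < 1 + δ * v := by positivity
  -- the point `x + δ' • (x - p)` lies on the segment from `x + δ • (x - y)` to `q`
  refine ⟨hp, δ * u / (1 + δ * v), by positivity, ?_⟩
  convert hC hz hq (inv_pos.2 hpos).le (by positivity : 0 ≤ δ * v / (1 + δ * v))
    (by field_simp) using 1
  obtain rfl : v = 1 - u := by linear_combination huv
  match_scalars <;> field_simp <;> ring

lemma isExtreme_minFace (hC : Convex 𝕜 C) : IsExtreme 𝕜 C (minFace 𝕜 C x) :=
  ⟨minFace_subset, fun _ hp _ hq _ hy hseg => mem_minFace_of_mem_openSegment hC hp hq hseg hy⟩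

lemma minFace_subset_of_isExtreme (hF : IsExtreme 𝕜 C F) (hx : x ∈ F) : minFace 𝕜 C x ⊆ F := by
  rintro y ⟨hy, δ, hδ, hz⟩
  refine hF.2 hy hz hx
    ⟨δ / (1 + δ), 1 / (1 + δ), by positivity, by positivity, by field_simp; ring, ?_⟩
  match_scalars <;> field_simp
  ring

lemma minFace_subset_minFace (hC : Convex 𝕜 C) (hy : y ∈ minFace 𝕜 C x) :
    minFace 𝕜 C y ⊆ minFace 𝕜 C x :=
  minFace_subset_of_isExtreme (isExtreme_minFace hC) hy

lemma minFace_eq_singleton (hx : x ∈ C.extremePoints 𝕜) : minFace 𝕜 C x = {x} :=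
  (minFace_subset_of_isExtreme (isExtreme_singleton.2 hx) rfl).antisymm
    (singleton_subset_iff.2 (self_mem_minFace hx.1))

lemma minFace_singleton : minFace 𝕜 {x} x = {x} :=
  minFace_eq_singleton (by rw [extremePoints_singleton]; rfl)

lemma minFace_inter (hA : Convex 𝕜 A) (hB : Convex 𝕜 B) (hx : x ∈ A ∩ B) :
    minFace 𝕜 (A ∩ B) x = minFace 𝕜 A x ∩ minFace 𝕜 B x := by
  ext y
  refine ⟨fun ⟨⟨hyA, hyB⟩, δ, hδ, hzA, hzB⟩ => ⟨⟨hyA, δ, hδ, hzA⟩, ⟨hyB, δ, hδ, hzB⟩⟩, ?_⟩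
  rintro ⟨⟨hyA, δ₁, hδ₁, h₁⟩, ⟨hyB, δ₂, hδ₂, h₂⟩⟩
  have hδ : 0 < min δ₁ δ₂ := lt_min hδ₁ hδ₂
  exact ⟨⟨hyA, hyB⟩, min δ₁ δ₂, hδ, hA.add_smul_sub_mem_of_le hx.1 h₁ hδ (min_le_left _ _),
    hB.add_smul_sub_mem_of_le hx.2 h₂ hδ (min_le_right _ _)⟩

-- a face `F` is `minFace A a` for `a ∈ F` with `minFace A a` maximal, which exists by finiteness
lemma IsExtreme.mem_insert_empty_image_minFace (hA : Convex 𝕜 A)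
    (hfin : (minFace 𝕜 A '' A).Finite) (hF : IsExtreme 𝕜 A F) (hFc : Convex 𝕜 F) :
    F ∈ insert ∅ (minFace 𝕜 A '' A) := by
  rcases F.eq_empty_or_nonempty with rfl | hne
  · exact mem_insert _ _
  obtain ⟨a₀, ha₀, hmax⟩ :=
    Finite.exists_maximalFor' (minFace 𝕜 A) F (hfin.subset (image_mono hF.1)) hne
  refine mem_insert_of_mem _ ⟨a₀, hF.1 ha₀,
    (minFace_subset_of_isExtreme hF ha₀).antisymm fun a ha => ?_⟩
  set m := (2⁻¹ : 𝕜) • a + (2⁻¹ : 𝕜) • a₀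
  have hm : m ∈ openSegment 𝕜 a a₀ := ⟨2⁻¹, 2⁻¹, by norm_num, by norm_num, by norm_num, rfl⟩
  have hmF : m ∈ F := hFc.openSegment_subset ha ha₀ hm
  have hface : IsExtreme 𝕜 A (minFace 𝕜 A m) := isExtreme_minFace hA
  have hmm : m ∈ minFace 𝕜 A m := self_mem_minFace (hF.1 hmF)
  have ha₀m := hface.right_mem_of_mem_openSegment (hF.1 ha) (hF.1 ha₀) hmm hm
  exact hmax hmF (minFace_subset_minFace hA ha₀m) (hface.2 (hF.1 ha) (hF.1 ha₀) hmm hm)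

lemma Convex.mem_or_mem_or_mem_openSegment_of_mem_convexHull_union (hA : Convex 𝕜 A)
    (hB : Convex 𝕜 B) (hy : y ∈ convexHull 𝕜 (A ∪ B)) :
    y ∈ A ∨ y ∈ B ∨ ∃ p ∈ A, ∃ q ∈ B, y ∈ openSegment 𝕜 p q := by
  rcases A.eq_empty_or_nonempty with rfl | hAne
  · rw [empty_union, hB.convexHull_eq] at hy
    exact Or.inr (Or.inl hy)
  rcases B.eq_empty_or_nonempty with rfl | hBne
  · rw [union_empty, hA.convexHull_eq] at hy
    exact Or.inl hy
  rw [hA.convexHull_union hB hAne hBne, mem_convexJoin] at hy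
  obtain ⟨p, hp, q, hq, hseg⟩ := hy
  rw [← insert_endpoints_openSegment] at hseg
  rcases hseg with rfl | rfl | hseg
  exacts [Or.inl hp, Or.inr (Or.inl hq), Or.inr (Or.inr ⟨p, hp, q, hq, hseg⟩)]

lemma minFace_convexHull_union (hA : Convex 𝕜 A) (hB : Convex 𝕜 B)
    (hx : x ∈ convexHull 𝕜 (A ∪ B)) :
    minFace 𝕜 (convexHull 𝕜 (A ∪ B)) x = convexHull 𝕜
      ((A ∩ minFace 𝕜 (convexHull 𝕜 (A ∪ B)) x) ∪ (B ∩ minFace 𝕜 (convexHull 𝕜 (A ∪ B)) x)) := by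
  set C := convexHull 𝕜 (A ∪ B)
  have hM : IsExtreme 𝕜 C (minFace 𝕜 C x) := isExtreme_minFace (convex_convexHull 𝕜 _)
  refine subset_antisymm (fun y hy => ?_)
    (convexHull_min (union_subset inter_subset_right inter_subset_right)
      ((convex_convexHull 𝕜 _).minFace hx))
  rcases hA.mem_or_mem_or_mem_openSegment_of_mem_convexHull_union hB hy.1 with
    hyA | hyB | ⟨p, hp, q, hq, hseg⟩
  · exact subset_convexHull 𝕜 _ (Or.inl ⟨hyA, hy⟩)
  · exact subset_convexHull 𝕜 _ (Or.inr ⟨hyB, hy⟩)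
  have hpC : p ∈ C := subset_convexHull 𝕜 _ (Or.inl hp)
  have hqC : q ∈ C := subset_convexHull 𝕜 _ (Or.inr hq)
  refine segment_subset_convexHull ?_ ?_ (openSegment_subset_segment 𝕜 p q hseg)
  exacts [Or.inl ⟨hp, hM.2 hpC hqC hy hseg⟩,
    Or.inr ⟨hq, hM.right_mem_of_mem_openSegment hpC hqC hy hseg⟩]

lemma exists_minFace_convexHull_union_eq (hA : Convex 𝕜 A) (hB : Convex 𝕜 B)
    (hAfin : (minFace 𝕜 A '' A).Finite) (hBfin : (minFace 𝕜 B '' B).Finite)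
    (hx : x ∈ convexHull 𝕜 (A ∪ B)) :
    ∃ FA ∈ insert ∅ (minFace 𝕜 A '' A), ∃ FB ∈ insert ∅ (minFace 𝕜 B '' B),
      minFace 𝕜 (convexHull 𝕜 (A ∪ B)) x = convexHull 𝕜 (FA ∪ FB) := by
  set C := convexHull 𝕜 (A ∪ B)
  have hM : IsExtreme 𝕜 C (minFace 𝕜 C x) := isExtreme_minFace (convex_convexHull 𝕜 _)
  have hMc : Convex 𝕜 (minFace 𝕜 C x) := (convex_convexHull 𝕜 _).minFace hx
  have hAC : A ⊆ C := subset_union_left.trans (subset_convexHull 𝕜 _)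
  have hBC : B ⊆ C := subset_union_right.trans (subset_convexHull 𝕜 _)
  exact ⟨_, (hM.inter_of_subset hAC).mem_insert_empty_image_minFace hA hAfin (hA.inter hMc),
    _, (hM.inter_of_subset hBC).mem_insert_empty_image_minFace hB hBfin (hB.inter hMc),
    minFace_convexHull_union hA hB hx⟩

end MinFace

namespace PtLattice

variable {d : ℕ} {X A B C : Set (Fin d → ℝ)}

lemma convex (h : PtLattice X C) : Convex ℝ C := by
  induction h with
  | single => exact convex_singleton _
  | inter _ _ hA hB => exact hA.inter hB
  | join => exact convex_convexHull ℝ _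

lemma convexHull_union_of_eq_empty_or (hA : A = ∅ ∨ PtLattice X A) (hB : B = ∅ ∨ PtLattice X B)
    (hne : (convexHull ℝ (A ∪ B)).Nonempty) : PtLattice X (convexHull ℝ (A ∪ B)) := by
  rcases hA with rfl | hA <;> rcases hB with rfl | hB
  · simp at hne
  · rwa [empty_union, hB.convex.convexHull_eq]
  · rwa [union_empty, hA.convex.convexHull_eq]
  · exact join hA hB

lemma finite_image_minFace (h : PtLattice X C) : (minFace ℝ C '' C).Finite := by
  induction h with
  | single => simp [minFace_singleton]
  | @inter A B hA hB hAfin hBfin =>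
    refine (hAfin.image2 (· ∩ ·) hBfin).subset ?_
    rintro _ ⟨x, hx, rfl⟩
    exact ⟨_, ⟨x, hx.1, rfl⟩, _, ⟨x, hx.2, rfl⟩, (minFace_inter hA.convex hB.convex hx).symm⟩
  | @join A B hA hB hAfin hBfin =>
    refine ((hAfin.insert ∅).image2 (fun F G => convexHull ℝ (F ∪ G)) (hBfin.insert ∅)).subset ?_
    rintro _ ⟨x, hx, rfl⟩
    obtain ⟨FA, hFA, FB, hFB, hx⟩ :=
      exists_minFace_convexHull_union_eq hA.convex hB.convex hAfin hBfin hx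
    exact ⟨FA, hFA, FB, hFB, hx.symm⟩

lemma minFace_mem (h : PtLattice X C) {x : Fin d → ℝ} (hx : x ∈ C) :
    PtLattice X (minFace ℝ C x) := by
  induction h generalizing x with
  | single hx₀ =>
    rw [mem_singleton_iff.1 hx, minFace_singleton]
    exact single hx₀
  | inter hA hB ihA ihB =>
    rw [minFace_inter hA.convex hB.convex hx]
    exact inter (ihA hx.1) (ihB hx.2)
  | join hA hB ihA ihB =>
    obtain ⟨FA, hFA, FB, hFB, hEq⟩ := exists_minFace_convexHull_union_eq hA.convex hB.convex
      hA.finite_image_minFace hB.finite_image_minFace hx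
    rw [hEq]
    refine convexHull_union_of_eq_empty_or ?_ ?_ (hEq ▸ ⟨x, self_mem_minFace hx⟩)
    · exact hFA.imp_right fun ⟨a, ha, hFa⟩ => hFa ▸ ihA ha
    · exact hFB.imp_right fun ⟨b, hb, hFb⟩ => hFb ▸ ihB hb

end PtLattice

/-- If `X` is complete, then for every `C ∈ 𝒦(X)` the extreme points of `C` lie in `X`. -/
theorem extremePoints_subset_of_complete (d : ℕ) (X : Set (Fin d → ℝ))
    (hX : ∀ x : Fin d → ℝ, PtLattice X {x} → x ∈ X) :
    ∀ C : Set (Fin d → ℝ), PtLattice X C → Set.extremePoints ℝ C ⊆ X := by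
  intro C hC x hx
  exact hX x (minFace_eq_singleton hx ▸ hC.minFace_mem hx.1)
end

section
/- Let X ⊆ ℝ^d be complete. Then every B ∈ 𝒦(X) satisfies B = convexHull ℝ (B ∩ X); that is, the map A ↦ convexHull ℝ A is a left inverse of the map B ↦ B ∩ X on 𝒦(X). -/
/-!
Induct on `B ∈ 𝒦(X)`; only intersections need an idea. A point of `A ∩ B` lies in a polytope
`Q = conv F ∩ conv G` with `F ⊆ A ∩ X`, `G ⊆ B ∩ X` finite. If `v` is an extreme point of `Q`,
write `v` with strictly positive weights on some `F₀ ⊆ F` and on some `G₀ ⊆ G`: any other point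
`u` of `conv F₀ ∩ conv G₀` could then be pushed past `v` without leaving `Q`, so
`conv F₀ ∩ conv G₀ = {v}`. This singleton lies in `𝒦(X)`, hence `v ∈ X` by completeness. There
are finitely many such pairs `(F₀, G₀)`, so `Q` has finitely many extreme points and Krein–Milman
gives `Q = conv (ext Q) ⊆ conv (Q ∩ X)`.
-/

open Set

section ConvexGeometry

variable {𝕜 E : Type*} [Field 𝕜] [LinearOrder 𝕜] [IsStrictOrderedRing 𝕜]
  [AddCommGroup E] [Module 𝕜 E]

lemma Finset.exists_subset_weights_ge_of_mem_convexHull {F : Finset E} {v : E}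
    (hv : v ∈ convexHull 𝕜 (F : Set E)) :
    ∃ F₀ ⊆ F, ∃ w : E → 𝕜, ∃ t : 𝕜, 0 < t ∧ (∀ y ∈ F₀, t ≤ w y) ∧
      ∑ y ∈ F₀, w y = 1 ∧ ∑ y ∈ F₀, w y • y = v := by
  classical
  obtain ⟨w, hw₀, hw₁, hwv⟩ := Finset.mem_convexHull'.1 hv
  set F₀ := F.filter (fun y => w y ≠ 0)
  have hsum : ∑ y ∈ F₀, w y = 1 := by rw [Finset.sum_filter_ne_zero, hw₁]
  have hne : F₀.Nonempty := Finset.nonempty_of_sum_ne_zero (by rw [hsum]; exact one_ne_zero)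
  have hpos : ∀ y ∈ F₀, 0 < w y := fun y hy =>
    (hw₀ y (Finset.mem_filter.1 hy).1).lt_of_ne' (Finset.mem_filter.1 hy).2
  have hsmul : ∑ y ∈ F₀, w y • y = v :=
    hwv ▸ Finset.sum_filter_of_ne fun y _ h hw => h (by rw [hw, zero_smul])
  exact ⟨F₀, Finset.filter_subset _ _, w, F₀.inf' hne w, (Finset.lt_inf'_iff _).2 hpos,
    fun y hy => Finset.inf'_le _ hy, hsum, hsmul⟩

lemma Finset.add_smul_sub_mem_convexHull {F : Finset E} {w : E → 𝕜} {t : 𝕜} {u v : E}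
    (ht₀ : 0 ≤ t) (ht : ∀ y ∈ F, t ≤ w y) (hw₁ : ∑ y ∈ F, w y = 1)
    (hwv : ∑ y ∈ F, w y • y = v) (hu : u ∈ convexHull 𝕜 (F : Set E)) :
    v + t • (v - u) ∈ convexHull 𝕜 (F : Set E) := by
  obtain ⟨w', hw'₀, hw'₁, hw'u⟩ := Finset.mem_convexHull'.1 hu
  refine Finset.mem_convexHull'.2 ⟨fun y => (1 + t) * w y - t * w' y, fun y hy => ?_, ?_, ?_⟩
  · have hw'_le : w' y ≤ 1 := hw'₁ ▸ Finset.single_le_sum hw'₀ hy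
    nlinarith [ht y hy, hw'₀ y hy, mul_le_mul_of_nonneg_left hw'_le ht₀]
  · rw [Finset.sum_sub_distrib, ← Finset.mul_sum, ← Finset.mul_sum, hw₁, hw'₁]
    ring
  · simp only [sub_smul, mul_smul, Finset.sum_sub_distrib, ← Finset.smul_sum, hwv, hw'u]
    module

lemma mem_openSegment_add_smul_sub {t : 𝕜} (ht : 0 < t) (u v : E) :
    v ∈ openSegment 𝕜 u (v + t • (v - u)) := by
  have h₁ : (0 : 𝕜) < 1 + t := by linarith
  refine ⟨t / (1 + t), 1 / (1 + t), by positivity, by positivity, by field_simp; ring, ?_⟩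
  match_scalars <;> field_simp
  ring

lemma exists_convexHull_inter_eq_singleton_of_mem_extremePoints {F G : Finset E} {v : E}
    (hv : v ∈ (convexHull 𝕜 (F : Set E) ∩ convexHull 𝕜 (G : Set E)).extremePoints 𝕜) :
    ∃ F₀ ⊆ F, ∃ G₀ ⊆ G, convexHull 𝕜 (F₀ : Set E) ∩ convexHull 𝕜 (G₀ : Set E) = {v} := by
  obtain ⟨⟨hvF, hvG⟩, hext⟩ := hv
  obtain ⟨F₀, hF₀, w, s, hs, hsw, hw₁, hwv⟩ :=
    Finset.exists_subset_weights_ge_of_mem_convexHull hvF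
  obtain ⟨G₀, hG₀, w', s', hs', hsw', hw'₁, hw'v⟩ :=
    Finset.exists_subset_weights_ge_of_mem_convexHull hvG
  have hvF₀ : v ∈ convexHull 𝕜 (F₀ : Set E) :=
    Finset.mem_convexHull'.2 ⟨w, fun y hy => hs.le.trans (hsw y hy), hw₁, hwv⟩
  have hvG₀ : v ∈ convexHull 𝕜 (G₀ : Set E) :=
    Finset.mem_convexHull'.2 ⟨w', fun y hy => hs'.le.trans (hsw' y hy), hw'₁, hw'v⟩
  refine ⟨F₀, hF₀, G₀, hG₀, Subset.antisymm ?_ (singleton_subset_iff.2 ⟨hvF₀, hvG₀⟩)⟩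
  rintro u ⟨huF₀, huG₀⟩
  set t := min s s'
  have ht : 0 < t := lt_min hs hs'
  have hF₀F := convexHull_mono (𝕜 := 𝕜) (Finset.coe_subset.2 hF₀)
  have hG₀G := convexHull_mono (𝕜 := 𝕜) (Finset.coe_subset.2 hG₀)
  have hpush : v + t • (v - u) ∈ convexHull 𝕜 (F : Set E) ∩ convexHull 𝕜 (G : Set E) :=
    ⟨hF₀F <| Finset.add_smul_sub_mem_convexHull ht.le
        (fun y hy => (min_le_left _ _).trans (hsw y hy)) hw₁ hwv huF₀,
      hG₀G <| Finset.add_smul_sub_mem_convexHull ht.le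
        (fun y hy => (min_le_right _ _).trans (hsw' y hy)) hw'₁ hw'v huG₀⟩
  exact hext ⟨hF₀F huF₀, hG₀G huG₀⟩ hpush (mem_openSegment_add_smul_sub ht u v)

lemma finite_extremePoints_convexHull_inter (F G : Finset E) :
    ((convexHull 𝕜 (F : Set E) ∩ convexHull 𝕜 (G : Set E)).extremePoints 𝕜).Finite := by
  choose! F₀ hF₀ G₀ hG₀ heq using fun v
    (hv : v ∈ (convexHull 𝕜 (F : Set E) ∩ convexHull 𝕜 (G : Set E)).extremePoints 𝕜) =>
    exists_convexHull_inter_eq_singleton_of_mem_extremePoints hv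
  refine Finite.of_injOn (f := fun v => (F₀ v, G₀ v)) (t := ↑(F.powerset ×ˢ G.powerset))
    (fun v hv => by simp [hF₀ v hv, hG₀ v hv]) (fun v hv v' hv' hvv' => ?_)
    (Finset.finite_toSet _)
  obtain ⟨hF, hG⟩ := Prod.mk.inj hvv'
  have hvv : ({v} : Set E) = {v'} := by rw [← heq v hv, ← heq v' hv', hF, hG]
  exact singleton_eq_singleton_iff.1 hvv

end ConvexGeometry

section KreinMilman

variable {E : Type*} [AddCommGroup E] [Module ℝ E] [TopologicalSpace E] [T2Space E]
  [IsTopologicalAddGroup E] [ContinuousSMul ℝ E] [LocallyConvexSpace ℝ E]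

lemma convexHull_extremePoints_eq_of_finite {s : Set E} (hs : IsCompact s) (hconv : Convex ℝ s)
    (hfin : (s.extremePoints ℝ).Finite) : convexHull ℝ (s.extremePoints ℝ) = s := by
  simpa [(hfin.isClosed_convexHull (𝕜 := ℝ)).closure_eq] using
    closure_convexHull_extremePoints hs hconv

lemma convexHull_extremePoints_convexHull_inter (F G : Finset E) :
    convexHull ℝ ((convexHull ℝ (F : Set E) ∩ convexHull ℝ (G : Set E)).extremePoints ℝ) =
      convexHull ℝ (F : Set E) ∩ convexHull ℝ (G : Set E) :=
  convexHull_extremePoints_eq_of_finite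
    ((F.finite_toSet.isCompact_convexHull (𝕜 := ℝ)).inter_right
      (G.finite_toSet.isClosed_convexHull (𝕜 := ℝ)))
    ((convex_convexHull ℝ _).inter (convex_convexHull ℝ _))
    (finite_extremePoints_convexHull_inter F G)

end KreinMilman

lemma convexHull_union_subset_convexHull_inter {E : Type*} [AddCommGroup E] [Module ℝ E]
    {A B X : Set E} (hA : A ⊆ convexHull ℝ (A ∩ X)) (hB : B ⊆ convexHull ℝ (B ∩ X)) :
    convexHull ℝ (A ∪ B) ⊆ convexHull ℝ (convexHull ℝ (A ∪ B) ∩ X) := by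
  have hsub : A ∪ B ⊆ convexHull ℝ (A ∪ B) := subset_convexHull ℝ _
  refine convexHull_min (union_subset ?_ ?_) (convex_convexHull ℝ _)
  · exact hA.trans (convexHull_mono (inter_subset_inter_left X (subset_union_left.trans hsub)))
  · exact hB.trans (convexHull_mono (inter_subset_inter_left X (subset_union_right.trans hsub)))

namespace PtLattice

variable {d : ℕ} {X : Set (Fin d → ℝ)}

lemma convex_s3 {B : Set (Fin d → ℝ)} (hB : PtLattice X B) : Convex ℝ B := by
  induction hB with
  | single _ => exact convex_singleton _
  | inter _ _ hA hB => exact hA.inter hB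
  | join _ _ _ _ => exact convex_convexHull ℝ _

lemma convexHull_finset {F : Finset (Fin d → ℝ)} (hF : F.Nonempty) (hFX : ↑F ⊆ X) :
    PtLattice X (convexHull ℝ (F : Set (Fin d → ℝ))) := by
  induction hF using Finset.Nonempty.cons_induction with
  | singleton a => simpa using single (hFX (by simp))
  | cons a F _ _ ih =>
    rw [Finset.coe_cons, insert_eq, ← convexHull_convexHull_union_right]
    simp only [Finset.coe_cons, insert_subset_iff] at hFX
    exact join (single hFX.1) (ih hFX.2)

variable (hX : ∀ x : Fin d → ℝ, PtLattice X {x} → x ∈ X)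
include hX

lemma extremePoints_convexHull_inter_subset {F G : Finset (Fin d → ℝ)} (hF : ↑F ⊆ X)
    (hG : ↑G ⊆ X) :
    (convexHull ℝ (F : Set (Fin d → ℝ)) ∩ convexHull ℝ (G : Set (Fin d → ℝ))).extremePoints ℝ
      ⊆ X := by
  intro v hv
  obtain ⟨F₀, hF₀, G₀, hG₀, heq⟩ := exists_convexHull_inter_eq_singleton_of_mem_extremePoints hv
  have hv₀ : v ∈ convexHull ℝ (F₀ : Set (Fin d → ℝ)) ∩ convexHull ℝ (G₀ : Set (Fin d → ℝ)) :=
    heq ▸ mem_singleton v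
  have hF₀ne := Finset.coe_nonempty.1 (convexHull_nonempty_iff.1 ⟨v, hv₀.1⟩)
  have hG₀ne := Finset.coe_nonempty.1 (convexHull_nonempty_iff.1 ⟨v, hv₀.2⟩)
  refine hX v (heq ▸ inter ?_ ?_)
  · exact convexHull_finset hF₀ne ((Finset.coe_subset.2 hF₀).trans hF)
  · exact convexHull_finset hG₀ne ((Finset.coe_subset.2 hG₀).trans hG)

lemma inter_subset_convexHull_inter {A B : Set (Fin d → ℝ)} (hAc : Convex ℝ A)
    (hBc : Convex ℝ B) (hA : A ⊆ convexHull ℝ (A ∩ X)) (hB : B ⊆ convexHull ℝ (B ∩ X)) :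
    A ∩ B ⊆ convexHull ℝ (A ∩ B ∩ X) := by
  rintro p ⟨hpA, hpB⟩
  obtain ⟨F, hF, hpF⟩ :=
    mem_iUnion₂.1 ((convexHull_eq_union_convexHull_finite_subsets (R := ℝ) _).subset (hA hpA))
  obtain ⟨G, hG, hpG⟩ :=
    mem_iUnion₂.1 ((convexHull_eq_union_convexHull_finite_subsets (R := ℝ) _).subset (hB hpB))
  have hQ : convexHull ℝ (F : Set (Fin d → ℝ)) ∩ convexHull ℝ (G : Set (Fin d → ℝ)) ⊆ A ∩ B :=
    inter_subset_inter (convexHull_min (hF.trans inter_subset_left) hAc)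
      (convexHull_min (hG.trans inter_subset_left) hBc)
  have hpQ := (convexHull_extremePoints_convexHull_inter F G).symm.subset ⟨hpF, hpG⟩
  refine convexHull_mono (subset_inter (extremePoints_subset.trans hQ) ?_) hpQ
  exact extremePoints_convexHull_inter_subset hX (hF.trans inter_subset_right)
    (hG.trans inter_subset_right)

lemma subset_convexHull_inter {B : Set (Fin d → ℝ)} (hB : PtLattice X B) :
    B ⊆ convexHull ℝ (B ∩ X) := by
  induction hB with
  | single hx =>
    rw [inter_eq_left.2 (singleton_subset_iff.2 hx)]
    exact subset_convexHull ℝ _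
  | inter hA hB ihA ihB => exact inter_subset_convexHull_inter hX hA.convex_s3 hB.convex_s3 ihA ihB
  | join _ _ ihA ihB => exact convexHull_union_subset_convexHull_inter ihA ihB

end PtLattice

/-- If `X` is complete, then every `B ∈ 𝒦(X)` satisfies `B = convexHull ℝ (B ∩ X)`. -/
theorem convexHull_inter_of_complete (d : ℕ) (X : Set (Fin d → ℝ))
    (hX : ∀ x : Fin d → ℝ, PtLattice X {x} → x ∈ X) :
    ∀ B : Set (Fin d → ℝ), PtLattice X B → B = convexHull ℝ (B ∩ X) := fun _ hB =>
  (hB.subset_convexHull_inter hX).antisymm (convexHull_min inter_subset_left hB.convex_s3)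
end

section
/- Let X ⊆ ℝ^d. Then every element of 𝒦(X) is a bounded polytope: for every C ∈ 𝒦(X) there exists a finite set F ⊆ ℝ^d with C = convexHull ℝ F. -/
variable {𝕜 E E' : Type*} [Field 𝕜] [AddCommGroup E] [Module 𝕜 E] [AddCommGroup E'] [Module 𝕜 E']

def levelCrossing (l : E →ₗ[𝕜] 𝕜) (c : 𝕜) (p q : E) : E :=
  ((l q - c) / (l q - l p)) • p + ((c - l p) / (l q - l p)) • q

section levelCrossing

variable {l : E →ₗ[𝕜] 𝕜} {c : 𝕜} {p q : E}

theorem smul_levelCrossing (h : l p ≠ l q) :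
    (l q - l p) • levelCrossing l c p q = (l q - c) • p + (c - l p) • q := by
  have h' : l q - l p ≠ 0 := sub_ne_zero.2 h.symm
  simp only [levelCrossing, smul_add, smul_smul, mul_div_cancel₀ _ h']

theorem apply_levelCrossing (h : l p ≠ l q) : l (levelCrossing l c p q) = c := by
  have h' : l q - l p ≠ 0 := sub_ne_zero.2 h.symm
  simp only [levelCrossing, map_add, map_smul, smul_eq_mul]
  field_simp
  ring

end levelCrossing

variable [LinearOrder 𝕜]

variable (𝕜) in
def IsPolytope (C : Set E) : Prop := ∃ s : Set E, s.Finite ∧ C = convexHull 𝕜 s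

namespace IsPolytope

variable {A B C : Set E}

theorem singleton (x : E) : IsPolytope 𝕜 {x} :=
  ⟨{x}, Set.finite_singleton x, (convexHull_singleton x).symm⟩

theorem convexHull_union (hA : IsPolytope 𝕜 A) (hB : IsPolytope 𝕜 B) :
    IsPolytope 𝕜 (convexHull 𝕜 (A ∪ B)) := by
  obtain ⟨s, hs, rfl⟩ := hA
  obtain ⟨t, ht, rfl⟩ := hB
  exact ⟨s ∪ t, hs.union ht, by
    rw [convexHull_convexHull_union_left, convexHull_convexHull_union_right]⟩

theorem image (h : IsPolytope 𝕜 C) (f : E →ₗ[𝕜] E') : IsPolytope 𝕜 (f '' C) := by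
  obtain ⟨s, hs, rfl⟩ := h
  exact ⟨f '' s, hs.image f, f.image_convexHull s⟩

end IsPolytope

def sliceGenerators (l : E →ₗ[𝕜] 𝕜) (c : 𝕜) (s : Set E) : Set E :=
  {p ∈ s | l p ≤ c} ∪ Set.image2 (levelCrossing l c) {p ∈ s | l p ≤ c} {q ∈ s | c < l q}

theorem Set.Finite.sliceGenerators {s : Set E} (hs : s.Finite) (l : E →ₗ[𝕜] 𝕜) (c : 𝕜) :
    (sliceGenerators l c s).Finite :=
  (hs.sep _).union ((hs.sep _).image2 _ (hs.sep _))

variable [IsStrictOrderedRing 𝕜]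

theorem levelCrossing_mem_convexHull {l : E →ₗ[𝕜] 𝕜} {c : 𝕜} {p q : E} {s : Set E}
    (hp : p ∈ s) (hq : q ∈ s) (hpc : l p ≤ c) (hcq : c < l q) :
    levelCrossing l c p q ∈ convexHull 𝕜 s := by
  have h : 0 < l q - l p := by linarith
  refine convex_convexHull 𝕜 s (subset_convexHull 𝕜 s hp) (subset_convexHull 𝕜 s hq)
    (div_nonneg (by linarith) h.le) (div_nonneg (by linarith) h.le) ?_
  rw [← add_div, div_eq_one_iff_eq h.ne']
  ring

theorem sliceGenerators_subset (l : E →ₗ[𝕜] 𝕜) (c : 𝕜) (s : Set E) :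
    sliceGenerators l c s ⊆ convexHull 𝕜 s ∩ {x | l x ≤ c} := by
  rintro x (⟨hx, hxc⟩ | ⟨p, ⟨hp, hpc⟩, q, ⟨hq, hcq⟩, rfl⟩)
  · exact ⟨subset_convexHull 𝕜 s hx, hxc⟩
  · exact ⟨levelCrossing_mem_convexHull hp hq hpc hcq,
      (apply_levelCrossing (by linarith : l p < l q).ne).le⟩

section Transport

variable {l : E →ₗ[𝕜] 𝕜} {c : 𝕜} {P Q : Finset E} {w : E → 𝕜}

theorem sum_smul_add_sum_smul_mem_convexHull_of_pos (hwP : ∀ p ∈ P, 0 ≤ w p)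
    (hwQ : ∀ q ∈ Q, 0 ≤ w q) (hP : ∀ p ∈ P, l p ≤ c) (hQ : ∀ q ∈ Q, c < l q)
    (hW : ∑ p ∈ P, w p + ∑ q ∈ Q, w q = 1)
    (hTS : ∑ q ∈ Q, w q * (l q - c) ≤ ∑ p ∈ P, w p * (c - l p))
    (hS : 0 < ∑ p ∈ P, w p * (c - l p)) :
    ∑ p ∈ P, w p • p + ∑ q ∈ Q, w q • q ∈
      convexHull 𝕜 (↑P ∪ Set.image2 (levelCrossing l c) ↑P ↑Q) := by
  set S := ∑ p ∈ P, w p * (c - l p)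
  set T := ∑ q ∈ Q, w q * (l q - c)
  -- Expanding `S • x` bilinearly exhibits `x` as the centre of mass of the points `p` with
  -- weights `(S - T) * w p` and of the crossing points of `[p, q]` with weights
  -- `w p * w q * (l q - l p)`.
  let ω : E ⊕ (E × E) → 𝕜 :=
    Sum.elim (fun p => (S - T) * w p) (fun pq => w pq.1 * w pq.2 * (l pq.2 - l pq.1))
  let z : E ⊕ (E × E) → E := Sum.elim id (fun pq => levelCrossing l c pq.1 pq.2)
  have hω : ∑ i ∈ P.disjSum (P ×ˢ Q), ω i = S := by
    have expand : ∀ p q, w p * w q * (l q - l p) =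
        w p * (w q * (l q - c)) + w q * (w p * (c - l p)) := fun _ _ => by ring
    simp only [ω, Finset.sum_disjSum, Sum.elim_inl, Sum.elim_inr, Finset.sum_product, expand,
      Finset.sum_add_distrib, ← Finset.mul_sum, ← Finset.sum_mul]
    linear_combination S * hW
  have hωz : ∑ i ∈ P.disjSum (P ×ˢ Q), ω i • z i =
      S • (∑ p ∈ P, w p • p + ∑ q ∈ Q, w q • q) := by
    have pair : ∀ p ∈ P, ∀ q ∈ Q, (w p * w q * (l q - l p)) • levelCrossing l c p q =
        (w q * (l q - c)) • (w p • p) + (w p * (c - l p)) • (w q • q) := by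
      intro p hp q hq
      rw [mul_smul, smul_levelCrossing (lt_of_le_of_lt (hP p hp) (hQ q hq)).ne]
      module
    simp only [ω, z, Finset.sum_disjSum, Sum.elim_inl, Sum.elim_inr, Finset.sum_product, id,
      mul_smul (S - T)]
    rw [Finset.sum_congr rfl fun p hp => Finset.sum_congr rfl fun q hq => pair p hp q hq]
    simp only [Finset.sum_add_distrib, ← Finset.smul_sum, ← Finset.sum_smul]
    module
  rw [← inv_smul_smul₀ hS.ne' (_ + _), ← hωz, ← hω]
  refine Finset.centerMass_mem_convexHull _ ?_ (hω ▸ hS) ?_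
  · rintro (p | ⟨p, q⟩) hi
    · exact mul_nonneg (by linarith) (hwP p (Finset.inl_mem_disjSum.1 hi))
    · obtain ⟨hp, hq⟩ := Finset.mem_product.1 (Finset.inr_mem_disjSum.1 hi)
      exact mul_nonneg (mul_nonneg (hwP p hp) (hwQ q hq)) (by linarith [hP p hp, hQ q hq])
  · rintro (p | ⟨p, q⟩) hi
    · exact Or.inl (Finset.inl_mem_disjSum.1 hi)
    · obtain ⟨hp, hq⟩ := Finset.mem_product.1 (Finset.inr_mem_disjSum.1 hi)
      exact Or.inr ⟨p, hp, q, hq, rfl⟩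

theorem sum_smul_add_sum_smul_mem_convexHull (hwP : ∀ p ∈ P, 0 ≤ w p)
    (hwQ : ∀ q ∈ Q, 0 ≤ w q) (hP : ∀ p ∈ P, l p ≤ c) (hQ : ∀ q ∈ Q, c < l q)
    (hW : ∑ p ∈ P, w p + ∑ q ∈ Q, w q = 1)
    (hTS : ∑ q ∈ Q, w q * (l q - c) ≤ ∑ p ∈ P, w p * (c - l p)) :
    ∑ p ∈ P, w p • p + ∑ q ∈ Q, w q • q ∈
      convexHull 𝕜 (↑P ∪ Set.image2 (levelCrossing l c) ↑P ↑Q) := by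
  have hT : ∀ q ∈ Q, 0 ≤ w q * (l q - c) := fun q hq =>
    mul_nonneg (hwQ q hq) (by linarith [hQ q hq])
  rcases (Finset.sum_nonneg fun p hp => mul_nonneg (hwP p hp) (by linarith [hP p hp]) :
    0 ≤ ∑ p ∈ P, w p * (c - l p)).eq_or_lt with hS | hS
  · have hQ0 : ∀ q ∈ Q, w q = 0 := fun q hq => by
      have hT0 := (Finset.sum_eq_zero_iff_of_nonneg hT).1
        (le_antisymm (by linarith) (Finset.sum_nonneg hT)) q hq
      exact (mul_eq_zero.1 hT0).resolve_right (by linarith [hQ q hq])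
    rw [Finset.sum_eq_zero hQ0, add_zero] at hW
    rw [Finset.sum_eq_zero (s := Q) fun q hq => by rw [hQ0 q hq, zero_smul], add_zero]
    exact (convex_convexHull 𝕜 _).sum_mem hwP hW fun p hp => subset_convexHull 𝕜 _ (Or.inl hp)
  · exact sum_smul_add_sum_smul_mem_convexHull_of_pos hwP hwQ hP hQ hW hTS hS

end Transport

theorem convexHull_inter_halfSpace_subset {s : Set E} (hs : s.Finite) (l : E →ₗ[𝕜] 𝕜) (c : 𝕜) :
    convexHull 𝕜 s ∩ {x | l x ≤ c} ⊆ convexHull 𝕜 (sliceGenerators l c s) := by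
  classical
  lift s to Finset E using hs with t
  rintro _ ⟨hx, hxc : l _ ≤ c⟩
  obtain ⟨w, hw₀, hw₁, rfl⟩ := Finset.mem_convexHull'.1 hx
  set P := t.filter (l · ≤ c)
  set Q := t.filter (¬ l · ≤ c)
  have hP : ∀ p ∈ P, p ∈ t ∧ l p ≤ c := fun p hp => Finset.mem_filter.1 hp
  have hQ : ∀ q ∈ Q, q ∈ t ∧ c < l q := fun q hq => by
    simpa only [not_le] using Finset.mem_filter.1 hq
  have hTS : ∑ q ∈ Q, w q * (l q - c) ≤ ∑ p ∈ P, w p * (c - l p) := by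
    have h : c - l (∑ y ∈ t, w y • y) =
        ∑ p ∈ P, w p * (c - l p) - ∑ q ∈ Q, w q * (l q - c) := calc
      _ = ∑ y ∈ t, w y * (c - l y) := by
        simp only [map_sum, map_smul, smul_eq_mul, mul_sub, Finset.sum_sub_distrib,
          ← Finset.sum_mul, hw₁, one_mul]
      _ = _ := by
        rw [← Finset.sum_filter_add_sum_filter_not t (l · ≤ c)]
        simp only [← neg_sub (l _) c, mul_neg, Finset.sum_neg_distrib, P, Q]
        ring
    linarith
  have hW : ∑ p ∈ P, w p + ∑ q ∈ Q, w q = 1 := by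
    rw [Finset.sum_filter_add_sum_filter_not, hw₁]
  rw [← Finset.sum_filter_add_sum_filter_not t (l · ≤ c)]
  refine convexHull_mono ?_ (sum_smul_add_sum_smul_mem_convexHull
    (fun p hp => hw₀ p (hP p hp).1) (fun q hq => hw₀ q (hQ q hq).1)
    (fun p hp => (hP p hp).2) (fun q hq => (hQ q hq).2) hW hTS)
  rintro _ (hp | ⟨p, hp, q, hq, rfl⟩)
  · exact Or.inl (hP _ hp)
  · exact Or.inr ⟨p, hP p hp, q, hQ q hq, rfl⟩

theorem convexHull_inter_halfSpace {s : Set E} (hs : s.Finite) (l : E →ₗ[𝕜] 𝕜)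
    (c : 𝕜) : convexHull 𝕜 s ∩ {x | l x ≤ c} = convexHull 𝕜 (sliceGenerators l c s) :=
  (convexHull_inter_halfSpace_subset hs l c).antisymm <| convexHull_min
    (sliceGenerators_subset l c s)
    ((convex_convexHull 𝕜 s).inter (convex_halfSpace_le l.isLinear c))

namespace IsPolytope

variable {A B C : Set E}

theorem prod {D : Set E'} (hC : IsPolytope 𝕜 C) (hD : IsPolytope 𝕜 D) :
    IsPolytope 𝕜 (C ×ˢ D) := by
  obtain ⟨s, hs, rfl⟩ := hC
  obtain ⟨t, ht, rfl⟩ := hD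
  exact ⟨s ×ˢ t, hs.prod ht, (convexHull_prod s t).symm⟩

theorem inter_halfSpace (h : IsPolytope 𝕜 C) (l : E →ₗ[𝕜] 𝕜) (c : 𝕜) :
    IsPolytope 𝕜 (C ∩ {x | l x ≤ c}) := by
  obtain ⟨s, hs, rfl⟩ := h
  exact ⟨_, hs.sliceGenerators l c, convexHull_inter_halfSpace hs l c⟩

theorem inter_hyperplane (h : IsPolytope 𝕜 C) (l : E →ₗ[𝕜] 𝕜) (c : 𝕜) :
    IsPolytope 𝕜 (C ∩ {x | l x = c}) := by
  have hyperplane : {x | l x = c} = {x | l x ≤ c} ∩ {x | (-l) x ≤ -c} := by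
    ext x
    simp only [Set.mem_inter_iff, Set.mem_ofPred_eq, LinearMap.neg_apply, neg_le_neg_iff,
      le_antisymm_iff]
  rw [hyperplane, ← Set.inter_assoc]
  exact (h.inter_halfSpace l c).inter_halfSpace (-l) (-c)

theorem inter_biInter_hyperplane {ι : Type*} (h : IsPolytope 𝕜 C) (l : ι → E →ₗ[𝕜] 𝕜)
    (c : ι → 𝕜) (s : Finset ι) : IsPolytope 𝕜 (C ∩ ⋂ i ∈ s, {x | l i x = c i}) := by
  classical
  induction s using Finset.induction_on with
  | empty => simpa using h
  | insert i s _ ih =>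
    rw [Finset.set_biInter_insert, Set.inter_comm {x | l i x = c i}, ← Set.inter_assoc]
    exact ih.inter_hyperplane (l i) (c i)

theorem inter_preimage_singleton [FiniteDimensional 𝕜 E'] (h : IsPolytope 𝕜 C) (f : E →ₗ[𝕜] E')
    (v : E') : IsPolytope 𝕜 (C ∩ f ⁻¹' {v}) := by
  let b := Module.finBasis 𝕜 E'
  have fiber : f ⁻¹' {v} = ⋂ i ∈ Finset.univ, {x | (b.coord i ∘ₗ f) x = b.coord i v} := by
    ext x
    simp [b.ext_elem_iff]
  rw [fiber]
  exact h.inter_biInter_hyperplane _ _ _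

theorem inter [FiniteDimensional 𝕜 E] (hA : IsPolytope 𝕜 A) (hB : IsPolytope 𝕜 B) :
    IsPolytope 𝕜 (A ∩ B) := by
  have diagonal : A ∩ B = LinearMap.fst 𝕜 E E ''
      (A ×ˢ B ∩ (LinearMap.fst 𝕜 E E - LinearMap.snd 𝕜 E E) ⁻¹' {0}) := by
    ext x
    simp [sub_eq_zero]
  rw [diagonal]
  exact ((hA.prod hB).inter_preimage_singleton _ 0).image _

end IsPolytope

/-- Every element of `𝒦(X)` is a bounded polytope: the convex hull of a finite set. -/
theorem ptLattice_mem_is_polytope (d : ℕ) (X : Set (Fin d → ℝ)) :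
    ∀ C : Set (Fin d → ℝ), PtLattice X C →
      ∃ F : Set (Fin d → ℝ), F.Finite ∧ C = convexHull ℝ F := by
  intro C hC
  change IsPolytope ℝ C
  induction hC with
  | single _ => exact IsPolytope.singleton _
  | inter _ _ hA hB => exact hA.inter hB
  | join _ _ hA hB => exact hA.convexHull_union hB
end
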